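/- The Sobolev-type orthonormal polynomials satisfy a five term recurrence relation: setting ρ_{k,n} = ⟨(x−c)² s_n^{M,N}, s_k^{M,N}⟩_S, one has (i) ρ_{k,n} = 0 whenever |n − k| > 2; (ii) ρ_{n+2,n} = t_n/t_{n+2}; (iii) ρ_{n+1,n} = γ_{n,n}γ_{n,n+1} + γ_{n−1,n}γ_{n−1,n+1}; (iv) ρ_{n,n} = γ_{n,n}² + γ_{n−1,n}² + γ_{n−2,n}² (with γ_{j,n} = 0 for j < 0); and (v) for every n ≥ 0, (x−c)²·s_n^{M,N}(x) = ρ_{n+2,n} s_{n+2}^{M,N}(x) + ρ_{n+1,n} s_{n+1}^{M,N}(x) + ρ_{n,n} s_n^{M,N}(x) + ρ_{n−1,n} s_{n−1}^{M,N}(x) + ρ_{n−2,n} s_{n−2}^{M,N}(x), with the convention s_{−1}^{M,N} = s_{−2}^{M,N} = 0. -/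

import Mathlib

open MeasureTheory Polynomial

/-- Squared norm `‖Q‖_μ² = ∫ Q(x)² dμ`. -/
noncomputable def nrmSq (μ : Measure ℝ) (Q : Polynomial ℝ) : ℝ := ∫ x, Q.eval x ^ 2 ∂μ

/-- Squared norm in the 2-iterated Christoffel measure `(x-c)² dμ`. -/
noncomputable def nrmSq2 (μ : Measure ℝ) (c : ℝ) (Q : Polynomial ℝ) : ℝ :=
  ∫ x, Q.eval x ^ 2 * (x - c) ^ 2 ∂μ

/-- Sobolev-type inner product `⟨f,g⟩_S = ∫ f g dμ + M f(c) g(c) + N f'(c) g'(c)`. -/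
noncomputable def ipS (μ : Measure ℝ) (c M N : ℝ) (f g : Polynomial ℝ) : ℝ :=
  (∫ x, f.eval x * g.eval x ∂μ) + M * (f.eval c * g.eval c)
    + N * ((derivative f).eval c * (derivative g).eval c)

/-- Leading coefficient `r_n = 1/‖P_n‖_μ` of the orthonormal polynomial `p_n`. -/
noncomputable def rC (μ : Measure ℝ) (P : ℕ → Polynomial ℝ) (n : ℕ) : ℝ :=
  1 / Real.sqrt (nrmSq μ (P n))

/-- Leading coefficient `r_n^{[2]} = 1/‖P_n^{[2]}‖_{[2]}`. -/
noncomputable def r2C (μ : Measure ℝ) (c : ℝ) (P2 : ℕ → Polynomial ℝ) (n : ℕ) : ℝ :=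
  1 / Real.sqrt (nrmSq2 μ c (P2 n))

/-- Orthonormal polynomial `p_n = P_n/‖P_n‖_μ`. -/
noncomputable def onP (μ : Measure ℝ) (P : ℕ → Polynomial ℝ) (n : ℕ) : Polynomial ℝ :=
  C (rC μ P n) * P n

/-- Orthonormal polynomial `p_n^{[2]} = P_n^{[2]}/‖P_n^{[2]}‖_{[2]}`. -/
noncomputable def onP2 (μ : Measure ℝ) (c : ℝ) (P2 : ℕ → Polynomial ℝ) (n : ℕ) : Polynomial ℝ :=
  C (r2C μ c P2 n) * P2 n

/-- Leading coefficient `t_n = 1/‖S_n^{M,N}‖_S` of the Sobolev-type orthonormal polynomial. -/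
noncomputable def tC (μ : Measure ℝ) (c M N : ℝ) (S : ℕ → Polynomial ℝ) (n : ℕ) : ℝ :=
  1 / Real.sqrt (ipS μ c M N (S n) (S n))

/-- Sobolev-type orthonormal polynomial `s_n^{M,N} = S_n^{M,N}/‖S_n^{M,N}‖_S`. -/
noncomputable def sN (μ : Measure ℝ) (c M N : ℝ) (S : ℕ → Polynomial ℝ) (n : ℕ) : Polynomial ℝ :=
  C (tC μ c M N S n) * S n

/-- Diagonal kernel value `K_n(c,c) = Σ_{j=0}^n P_j(c)²/‖P_j‖_μ²`. -/
noncomputable def Kcc (μ : Measure ℝ) (P : ℕ → Polynomial ℝ) (c : ℝ) (n : ℕ) : ℝ :=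
  ∑ j ∈ Finset.range (n + 1), (P j).eval c ^ 2 / nrmSq μ (P j)

/-- Kernel `K_n^{(0,j)}(x,c)` as a polynomial in `x`:
`Σ_{k=0}^n (d/dy)^j P_k(y)|_{y=c} · P_k(x)/‖P_k‖_μ²`. -/
noncomputable def Kpoly (μ : Measure ℝ) (P : ℕ → Polynomial ℝ) (c : ℝ) (n j : ℕ) : Polynomial ℝ :=
  ∑ k ∈ Finset.range (n + 1), C ((derivative^[j] (P k)).eval c / nrmSq μ (P k)) * P k

/-- Mixed derivative of the kernel at the diagonal:
`K_n^{(i,j)}(c,c) = Σ_{k=0}^n P_k^{(i)}(c) P_k^{(j)}(c)/‖P_k‖_μ²`. -/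
noncomputable def Kder (μ : Measure ℝ) (P : ℕ → Polynomial ℝ) (c : ℝ) (n i j : ℕ) : ℝ :=
  ∑ k ∈ Finset.range (n + 1),
    (derivative^[i] (P k)).eval c * (derivative^[j] (P k)).eval c / nrmSq μ (P k)

/-- Connection coefficient `d_n`. -/
noncomputable def dCoef (P : ℕ → Polynomial ℝ) (c : ℝ) (n : ℕ) : ℝ :=
  ((P (n + 2)).eval c * (derivative (P n)).eval c
      - (derivative (P (n + 2))).eval c * (P n).eval c) /
    ((P (n + 1)).eval c * (derivative (P n)).eval c
      - (derivative (P (n + 1))).eval c * (P n).eval c)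

/-- Connection coefficient `e_n`. -/
noncomputable def eCoef (P : ℕ → Polynomial ℝ) (c : ℝ) (n : ℕ) : ℝ :=
  ((P (n + 2)).eval c * (derivative (P (n + 1))).eval c
      - (derivative (P (n + 2))).eval c * (P (n + 1)).eval c) /
    ((P (n + 1)).eval c * (derivative (P n)).eval c
      - (derivative (P (n + 1))).eval c * (P n).eval c)

/-- Connection coefficient `γ_{j,n} = ⟨s_n^{M,N}, p_j^{[2]}⟩_{[2]}`. -/
noncomputable def gamC (μ : Measure ℝ) (c M N : ℝ) (S P2 : ℕ → Polynomial ℝ) (j n : ℕ) : ℝ :=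
  ∫ x, (sN μ c M N S n).eval x * (onP2 μ c P2 j).eval x * (x - c) ^ 2 ∂μ

/-- Jacobi matrix of `μ`: `J(n,m) = ∫ x p_n(x) p_m(x) dμ`. -/
noncomputable def Jmat (μ : Measure ℝ) (P : ℕ → Polynomial ℝ) (n m : ℕ) : ℝ :=
  ∫ x, x * ((onP μ P n).eval x * (onP μ P m).eval x) ∂μ

/-- Jacobi matrix of `(x-c)² dμ`: `J_{[2]}(n,m) = ∫ x p_n^{[2]}(x) p_m^{[2]}(x) (x-c)² dμ`. -/
noncomputable def J2mat (μ : Measure ℝ) (c : ℝ) (P2 : ℕ → Polynomial ℝ) (n m : ℕ) : ℝ :=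
  ∫ x, x * ((onP2 μ c P2 n).eval x * (onP2 μ c P2 m).eval x) * (x - c) ^ 2 ∂μ

/-- Five-diagonal matrix `H(n,m) = ⟨(x-c)² s_n^{M,N}, s_m^{M,N}⟩_S`. -/
noncomputable def Hmat (μ : Measure ℝ) (c M N : ℝ) (S : ℕ → Polynomial ℝ) (n m : ℕ) : ℝ :=
  ipS μ c M N ((X - C c) ^ 2 * sN μ c M N S n) (sN μ c M N S m)

/-- Kronecker delta. -/
noncomputable def kdel (n m : ℕ) : ℝ := if n = m then 1 else 0

/-- Five term recurrence coefficient `ρ_{k,n} = ⟨(x-c)² s_n^{M,N}, s_k^{M,N}⟩_S`. -/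
noncomputable def rhoC (μ : Measure ℝ) (c M N : ℝ) (S : ℕ → Polynomial ℝ) (k n : ℕ) : ℝ :=
  ipS μ c M N ((X - C c) ^ 2 * sN μ c M N S n) (sN μ c M N S k)


/-!
Since `(x - c)² f` vanishes to second order at `c`, `⟨(x - c)² f, g⟩_S = ⟨f, g⟩_{[2]}`. Hence
`ρ_{k,n} = ⟨s_n, s_k⟩_{[2]}` is symmetric in `k, n`, and it vanishes for `k > n + 2` because
`(x - c)² s_n` has degree `n + 2` and `s_k` is `S`-orthogonal to lower degrees. Expanding `s_k` in
the orthonormal basis `p_j^{[2]}` gives `ρ_{k,n} = Σ_j γ_{j,n} γ_{j,k}`, where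
`γ_{j,n} = ⟨(x - c)² p_j^{[2]}, s_n⟩_S` vanishes for `j + 2 < n`. Comparing leading coefficients
gives `ρ_{n+2,n}`, and the recurrence is the Fourier expansion of `(x - c)² s_n` in the basis `s_k`.
-/

open Finset
open LinearMap (BilinForm)

theorem Finset.sum_range_succ_eq_top_three {A : Type*} [AddCommMonoid A] {a : ℕ → A} {n : ℕ}
    (h : ∀ j, j + 2 < n → a j = 0) :
    ∑ j ∈ range (n + 1), a j
      = a n + (if 1 ≤ n then a (n - 1) else 0) + (if 2 ≤ n then a (n - 2) else 0) := by
  rcases n with _ | _ | n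
  · simp
  · simp [sum_range_succ, add_comm]
  · rw [sum_range_succ, sum_range_succ, sum_range_succ,
      sum_eq_zero fun j hj => h j (by simp at hj; omega)]
    simp only [if_pos (by omega : 1 ≤ n + 2), if_pos (by omega : 2 ≤ n + 2),
      show n + 2 - 1 = n + 1 by omega, show n + 2 - 2 = n by omega]
    abel

theorem Polynomial.degree_X_sub_C_sq_mul_lt {c : ℝ} {p : ℝ[X]} {n m : ℕ} (hp : p.natDegree ≤ n)
    (hnm : n + 2 < m) : ((X - C c) ^ 2 * p).degree < ↑m := by
  have : ((X - C c) ^ 2 * p).natDegree < m := by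
    have := natDegree_mul_le (p := (X - C c) ^ 2) (q := p)
    have := natDegree_pow_le (p := X - C c) (n := 2)
    simp only [natDegree_X_sub_C] at *
    omega
  exact degree_le_natDegree.trans_lt (by exact_mod_cast this)

section OrthogonalFamily

variable (B : BilinForm ℝ ℝ[X]) (F : ℕ → ℝ[X])

noncomputable def orthonormalize (n : ℕ) : ℝ[X] :=
  C (1 / Real.sqrt (B (F n) (F n))) * F n

variable {B F}

theorem orthonormalize_eq_smul (n : ℕ) :
    orthonormalize B F n = (Real.sqrt (B (F n) (F n)))⁻¹ • F n := by
  rw [orthonormalize, smul_eq_C_mul, one_div]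

theorem apply_orthonormalize_self (n : ℕ) :
    B (F n) (orthonormalize B F n) = Real.sqrt (B (F n) (F n)) := by
  rw [orthonormalize_eq_smul, map_smul, smul_eq_mul, ← div_eq_inv_mul, Real.div_sqrt]

theorem natDegree_orthonormalize_le (hFd : ∀ n, (F n).natDegree = n) (n : ℕ) :
    (orthonormalize B F n).natDegree ≤ n :=
  (natDegree_C_mul_le _ _).trans (hFd n).le

variable (hFm : ∀ n, (F n).Monic) (hFd : ∀ n, (F n).natDegree = n)
include hFm hFd

theorem span_image_Iio_eq_degreeLT (m : ℕ) : Submodule.span ℝ (F '' Set.Iio m) = degreeLT ℝ m :=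
  Sequence.span_degreeLT ⟨F, fun n => by rw [degree_eq_natDegree (hFm n).ne_zero, hFd]⟩
    fun i _ => by simp [(hFm i).leadingCoeff]

variable (hFo : ∀ m n, m ≠ n → B (F m) (F n) = 0)
include hFo

theorem apply_orthonormalize_eq_zero_of_degree_lt (hB : B.IsSymm) {n : ℕ} {Q : ℝ[X]}
    (hQ : Q.degree < ↑n) : B Q (orthonormalize B F n) = 0 := by
  have hspan : Submodule.span ℝ (F '' Set.Iio n) ≤ LinearMap.ker (B (F n)) := by
    rw [Submodule.span_le]
    rintro _ ⟨k, hk, rfl⟩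
    exact hFo n k (Nat.ne_of_gt hk)
  have hQ' : Q ∈ Submodule.span ℝ (F '' Set.Iio n) := by
    rw [span_image_Iio_eq_degreeLT hFm hFd]
    exact mem_degreeLT.2 hQ
  rw [hB.eq, orthonormalize_eq_smul, map_smul, LinearMap.smul_apply,
    LinearMap.mem_ker.1 (hspan hQ'), smul_zero]

theorem apply_orthonormalize_of_monic (hB : B.IsSymm) {n : ℕ} {Q : ℝ[X]} (hQm : Q.Monic)
    (hQd : Q.natDegree = n) : B Q (orthonormalize B F n) = Real.sqrt (B (F n) (F n)) := by
  have hdeg : Q.degree = (F n).degree := by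
    rw [degree_eq_natDegree hQm.ne_zero, degree_eq_natDegree (hFm n).ne_zero, hQd, hFd]
  have hlt : (Q - F n).degree < n := by
    have := degree_sub_lt_left hdeg hQm.ne_zero (by rw [hQm.leadingCoeff, (hFm n).leadingCoeff])
    rwa [degree_eq_natDegree hQm.ne_zero, hQd] at this
  rw [← sub_add_cancel Q (F n), map_add, LinearMap.add_apply,
    apply_orthonormalize_eq_zero_of_degree_lt hFm hFd hFo hB hlt, zero_add,
    apply_orthonormalize_self]

variable (hFpos : ∀ n, 0 < B (F n) (F n))
include hFpos

theorem eq_sum_apply_orthonormalize_smul {m : ℕ} {Q : ℝ[X]} (hQ : Q.degree < ↑m) :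
    Q = ∑ k ∈ range m, B Q (orthonormalize B F k) • orthonormalize B F k := by
  let π : ℝ[X] →ₗ[ℝ] ℝ[X] :=
    ∑ k ∈ range m, (B.flip (orthonormalize B F k)).smulRight (orthonormalize B F k)
  have hπ : ∀ Q, π Q = ∑ k ∈ range m, B Q (orthonormalize B F k) • orthonormalize B F k := by
    intro Q
    simp [π]
  have hgen : Set.EqOn (LinearMap.id : ℝ[X] →ₗ[ℝ] ℝ[X]) π (F '' Set.Iio m) := by
    rintro _ ⟨j, hj, rfl⟩
    rw [hπ, sum_eq_single_of_mem j (mem_range.2 hj), apply_orthonormalize_self,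
      orthonormalize_eq_smul, smul_inv_smul₀ (Real.sqrt_pos.2 (hFpos j)).ne', LinearMap.id_apply]
    intro k _ hkj
    rw [orthonormalize_eq_smul, map_smul, hFo j k hkj.symm, smul_zero, zero_smul]
  have hQ' : Q ∈ Submodule.span ℝ (F '' Set.Iio m) := by
    rw [span_image_Iio_eq_degreeLT hFm hFd]
    exact mem_degreeLT.2 hQ
  rw [← hπ]
  exact LinearMap.eqOn_span' hgen hQ'

theorem apply_eq_sum_apply_orthonormalize_mul {m : ℕ} {g : ℝ[X]} (hg : g.degree < ↑m) (Q : ℝ[X]) :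
    B Q g = ∑ k ∈ range m, B Q (orthonormalize B F k) * B g (orthonormalize B F k) := by
  conv_lhs => rw [eq_sum_apply_orthonormalize_smul hFm hFd hFo hFpos hg]
  simp [map_sum, mul_comm]

end OrthogonalFamily

section SobolevForm

variable {μ : Measure ℝ} (hmom : ∀ n : ℕ, Integrable (fun x : ℝ => x ^ n) μ)
include hmom

theorem integrable_eval_of_moments (p : ℝ[X]) : Integrable (fun x => p.eval x) μ := by
  simp_rw [eval_eq_sum_range]
  exact integrable_finsetSum _ fun i _ => (hmom i).const_mul _

theorem integrable_eval_mul_eval (f g : ℝ[X]) : Integrable (fun x => f.eval x * g.eval x) μ := by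
  simpa using integrable_eval_of_moments hmom (f * g)

theorem integrable_eval_mul_eval_mul_sub_sq (c : ℝ) (f g : ℝ[X]) :
    Integrable (fun x => f.eval x * g.eval x * (x - c) ^ 2) μ := by
  convert integrable_eval_of_moments hmom (f * g * (X - C c) ^ 2) using 2
  simp

noncomputable def sobolevForm (c M N : ℝ) : BilinForm ℝ ℝ[X] :=
  LinearMap.mk₂ ℝ (ipS μ c M N)
    (fun f₁ f₂ g => by
      simp only [ipS, eval_add, derivative_add, add_mul]
      rw [integral_add (integrable_eval_mul_eval hmom f₁ g) (integrable_eval_mul_eval hmom f₂ g)]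
      ring)
    (fun a f g => by
      simp only [ipS, eval_smul, derivative_smul, smul_eq_mul, mul_assoc, integral_const_mul]
      ring)
    (fun f g₁ g₂ => by
      simp only [ipS, eval_add, derivative_add, mul_add]
      rw [integral_add (integrable_eval_mul_eval hmom f g₁) (integrable_eval_mul_eval hmom f g₂)]
      ring)
    (fun a f g => by
      simp only [ipS, eval_smul, derivative_smul, smul_eq_mul, mul_left_comm _ a,
        integral_const_mul]
      ring)

noncomputable def christoffelForm (c : ℝ) : BilinForm ℝ ℝ[X] :=
  LinearMap.mk₂ ℝ (fun f g => ∫ x, f.eval x * g.eval x * (x - c) ^ 2 ∂μ)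
    (fun f₁ f₂ g => by
      simp only [eval_add, add_mul]
      exact integral_add (integrable_eval_mul_eval_mul_sub_sq hmom c f₁ g)
        (integrable_eval_mul_eval_mul_sub_sq hmom c f₂ g))
    (fun a f g => by
      simp only [eval_smul, smul_eq_mul, mul_assoc, integral_const_mul])
    (fun f g₁ g₂ => by
      simp only [eval_add, mul_add, add_mul]
      exact integral_add (integrable_eval_mul_eval_mul_sub_sq hmom c f g₁)
        (integrable_eval_mul_eval_mul_sub_sq hmom c f g₂))
    (fun a f g => by
      simp only [eval_smul, smul_eq_mul, ← integral_const_mul]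
      congr 1 with x
      ring)

theorem sobolevForm_apply (c M N : ℝ) (f g : ℝ[X]) :
    sobolevForm hmom c M N f g = ipS μ c M N f g := rfl

theorem christoffelForm_apply (c : ℝ) (f g : ℝ[X]) :
    christoffelForm hmom c f g = ∫ x, f.eval x * g.eval x * (x - c) ^ 2 ∂μ := rfl

theorem sobolevForm_isSymm (c M N : ℝ) : (sobolevForm hmom c M N).IsSymm := by
  refine ⟨fun f g => ?_⟩
  simp only [sobolevForm_apply, ipS, mul_comm (eval _ f), mul_comm (eval c (derivative f))]

theorem christoffelForm_isSymm (c : ℝ) : (christoffelForm hmom c).IsSymm := by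
  refine ⟨fun f g => ?_⟩
  simp only [christoffelForm_apply, mul_comm (eval _ f)]

theorem sobolevForm_self_pos (hpos : ∀ q : ℝ[X], q ≠ 0 → 0 < ∫ x, q.eval x ^ 2 ∂μ)
    {c M N : ℝ} (hM : 0 ≤ M) (hN : 0 ≤ N) {Q : ℝ[X]} (hQ : Q ≠ 0) :
    0 < sobolevForm hmom c M N Q Q := by
  simp only [sobolevForm_apply, ipS, ← sq]
  have := hpos Q hQ
  positivity

theorem christoffelForm_self_pos (hpos : ∀ q : ℝ[X], q ≠ 0 → 0 < ∫ x, q.eval x ^ 2 ∂μ)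
    (c : ℝ) {Q : ℝ[X]} (hQ : Q ≠ 0) : 0 < christoffelForm hmom c Q Q := by
  simpa [christoffelForm_apply, mul_pow, ← sq, mul_comm] using
    hpos ((X - C c) * Q) (mul_ne_zero (X_sub_C_ne_zero c) hQ)

theorem sobolevForm_X_sub_C_sq_mul (c M N : ℝ) (f g : ℝ[X]) :
    sobolevForm hmom c M N ((X - C c) ^ 2 * f) g = christoffelForm hmom c f g := by
  simp only [sobolevForm_apply, christoffelForm_apply, ipS]
  simp [derivative_mul, derivative_pow, mul_comm, mul_assoc]

end SobolevForm

section FiveTermRecurrence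

variable {μ : Measure ℝ} (hmom : ∀ n : ℕ, Integrable (fun x : ℝ => x ^ n) μ) {c M N : ℝ}
  {S : ℕ → ℝ[X]}
include hmom

theorem sN_eq_orthonormalize : sN μ c M N S = orthonormalize (sobolevForm hmom c M N) S := rfl

theorem onP2_eq_orthonormalize (P2 : ℕ → ℝ[X]) :
    onP2 μ c P2 = orthonormalize (christoffelForm hmom c) P2 := by
  ext1 n
  simp only [onP2, r2C, nrmSq2, orthonormalize, christoffelForm_apply, ← sq]

theorem rhoC_eq_sobolevForm (k n : ℕ) :
    rhoC μ c M N S k n = sobolevForm hmom c M N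
      ((X - C c) ^ 2 * orthonormalize (sobolevForm hmom c M N) S n)
      (orthonormalize (sobolevForm hmom c M N) S k) := rfl

theorem rhoC_eq_christoffelForm (k n : ℕ) :
    rhoC μ c M N S k n = christoffelForm hmom c (sN μ c M N S n) (sN μ c M N S k) :=
  sobolevForm_X_sub_C_sq_mul hmom c M N _ _

theorem rhoC_comm (k n : ℕ) : rhoC μ c M N S k n = rhoC μ c M N S n k := by
  rw [rhoC_eq_christoffelForm hmom, rhoC_eq_christoffelForm hmom,
    (christoffelForm_isSymm hmom c).eq]

variable (hSm : ∀ n, (S n).Monic) (hSd : ∀ n, (S n).natDegree = n)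
  (hSo : ∀ m n, m ≠ n → ipS μ c M N (S m) (S n) = 0)
include hSm hSd hSo

theorem rhoC_eq_zero {k n : ℕ} (hkn : k + 2 < n ∨ n + 2 < k) : rhoC μ c M N S k n = 0 := by
  rcases hkn with hkn | hnk
  · rw [rhoC_comm hmom, rhoC_eq_sobolevForm hmom]
    exact apply_orthonormalize_eq_zero_of_degree_lt hSm hSd hSo (sobolevForm_isSymm hmom c M N)
      (degree_X_sub_C_sq_mul_lt (natDegree_orthonormalize_le hSd k) hkn)
  · rw [rhoC_eq_sobolevForm hmom]
    exact apply_orthonormalize_eq_zero_of_degree_lt hSm hSd hSo (sobolevForm_isSymm hmom c M N)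
      (degree_X_sub_C_sq_mul_lt (natDegree_orthonormalize_le hSd n) hnk)

theorem rhoC_add_two_self (n : ℕ) :
    rhoC μ c M N S (n + 2) n = tC μ c M N S n / tC μ c M N S (n + 2) := by
  have hmonic : ((X - C c) ^ 2 * S n).Monic := ((monic_X_sub_C c).pow 2).mul (hSm n)
  have hdeg : ((X - C c) ^ 2 * S n).natDegree = n + 2 := by
    rw [((monic_X_sub_C c).pow 2).natDegree_mul (hSm n), natDegree_pow, natDegree_X_sub_C, hSd]
    ring
  have hsmul : (X - C c) ^ 2 * orthonormalize (sobolevForm hmom c M N) S n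
      = tC μ c M N S n • ((X - C c) ^ 2 * S n) := by
    rw [← sN_eq_orthonormalize hmom, sN, smul_eq_C_mul]
    ring
  rw [rhoC_eq_sobolevForm hmom, hsmul, map_smul, LinearMap.smul_apply,
    apply_orthonormalize_of_monic hSm hSd hSo (sobolevForm_isSymm hmom c M N) hmonic hdeg,
    smul_eq_mul, sobolevForm_apply]
  simp only [tC, div_div_eq_mul_div, div_one]

theorem gamC_eq_zero {P2 : ℕ → ℝ[X]} (hP2d : ∀ n, (P2 n).natDegree = n) {j n : ℕ}
    (hjn : j + 2 < n) : gamC μ c M N S P2 j n = 0 := by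
  rw [gamC, ← christoffelForm_apply hmom, (christoffelForm_isSymm hmom c).eq,
    ← sobolevForm_X_sub_C_sq_mul hmom c M N, sN_eq_orthonormalize hmom]
  exact apply_orthonormalize_eq_zero_of_degree_lt hSm hSd hSo (sobolevForm_isSymm hmom c M N)
    (degree_X_sub_C_sq_mul_lt ((natDegree_C_mul_le _ _).trans (hP2d j).le) hjn)

omit hSm hSo in
theorem rhoC_eq_sum_gamC_mul (hpos : ∀ q : ℝ[X], q ≠ 0 → 0 < ∫ x, q.eval x ^ 2 ∂μ)
    {P2 : ℕ → ℝ[X]} (hP2m : ∀ n, (P2 n).Monic) (hP2d : ∀ n, (P2 n).natDegree = n)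
    (hP2o : ∀ m n, m ≠ n → ∫ x, (P2 m).eval x * (P2 n).eval x * (x - c) ^ 2 ∂μ = 0) (k n : ℕ) :
    rhoC μ c M N S k n = ∑ j ∈ range (k + 1), gamC μ c M N S P2 j n * gamC μ c M N S P2 j k := by
  have hk : (sN μ c M N S k).natDegree ≤ k :=
    natDegree_orthonormalize_le (B := sobolevForm hmom c M N) hSd k
  have hdeg : (sN μ c M N S k).degree < ↑(k + 1) :=
    degree_le_natDegree.trans_lt (by exact_mod_cast Nat.lt_succ_of_le hk)
  have hP2o' : ∀ m n, m ≠ n → christoffelForm hmom c (P2 m) (P2 n) = 0 := hP2o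
  simp only [rhoC_eq_christoffelForm hmom, gamC, ← christoffelForm_apply hmom,
    onP2_eq_orthonormalize hmom]
  exact apply_eq_sum_apply_orthonormalize_mul hP2m hP2d hP2o'
    (fun j => christoffelForm_self_pos hmom hpos c (hP2m j).ne_zero) hdeg _

theorem X_sub_C_sq_mul_sN_eq_sum (hpos : ∀ q : ℝ[X], q ≠ 0 → 0 < ∫ x, q.eval x ^ 2 ∂μ)
    (hM : 0 ≤ M) (hN : 0 ≤ N) (n : ℕ) :
    (X - C c) ^ 2 * sN μ c M N S n
      = ∑ k ∈ range (n + 3), C (rhoC μ c M N S k n) * sN μ c M N S k := by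
  simp only [← smul_eq_C_mul, rhoC_eq_sobolevForm hmom, sN_eq_orthonormalize hmom]
  exact eq_sum_apply_orthonormalize_smul hSm hSd hSo
    (fun k => sobolevForm_self_pos hmom hpos hM hN (hSm k).ne_zero)
    (degree_X_sub_C_sq_mul_lt (natDegree_orthonormalize_le hSd n) (by omega : n + 2 < n + 3))

end FiveTermRecurrence

theorem stmt12_general
    (μ : Measure ℝ)
    (hmom : ∀ n : ℕ, Integrable (fun x : ℝ => x ^ n) μ)
    (hpos : ∀ q : Polynomial ℝ, q ≠ 0 → 0 < ∫ x, q.eval x ^ 2 ∂μ)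
    (c : ℝ)
    (P2 : ℕ → Polynomial ℝ) (hP2m : ∀ n, (P2 n).Monic) (hP2d : ∀ n, (P2 n).natDegree = n)
    (hP2o : ∀ m n, m ≠ n → ∫ x, (P2 m).eval x * (P2 n).eval x * (x - c) ^ 2 ∂μ = 0)
    (M N : ℝ) (hM : 0 ≤ M) (hN : 0 ≤ N)
    (S : ℕ → Polynomial ℝ) (hSm : ∀ n, (S n).Monic) (hSd : ∀ n, (S n).natDegree = n)
    (hSo : ∀ m n, m ≠ n → ipS μ c M N (S m) (S n) = 0) :
    (∀ k n : ℕ, k + 2 < n ∨ n + 2 < k → rhoC μ c M N S k n = 0)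
    ∧ (∀ n : ℕ, rhoC μ c M N S (n + 2) n = tC μ c M N S n / tC μ c M N S (n + 2))
    ∧ (∀ n : ℕ, rhoC μ c M N S (n + 1) n
        = gamC μ c M N S P2 n n * gamC μ c M N S P2 n (n + 1)
          + (if 1 ≤ n then gamC μ c M N S P2 (n - 1) n * gamC μ c M N S P2 (n - 1) (n + 1)
             else 0))
    ∧ (∀ n : ℕ, rhoC μ c M N S n n
        = gamC μ c M N S P2 n n ^ 2
          + (if 1 ≤ n then gamC μ c M N S P2 (n - 1) n ^ 2 else 0)
          + (if 2 ≤ n then gamC μ c M N S P2 (n - 2) n ^ 2 else 0))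
    ∧ (∀ n : ℕ,
        (X - C c) ^ 2 * sN μ c M N S n
          = C (rhoC μ c M N S (n + 2) n) * sN μ c M N S (n + 2)
            + C (rhoC μ c M N S (n + 1) n) * sN μ c M N S (n + 1)
            + C (rhoC μ c M N S n n) * sN μ c M N S n
            + (if 1 ≤ n then C (rhoC μ c M N S (n - 1) n) * sN μ c M N S (n - 1) else 0)
            + (if 2 ≤ n then C (rhoC μ c M N S (n - 2) n) * sN μ c M N S (n - 2) else 0)) := by
  have hγ {j n : ℕ} (h : j + 2 < n) : gamC μ c M N S P2 j n = 0 :=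
    gamC_eq_zero hmom hSm hSd hSo hP2d h
  have hρ := rhoC_eq_sum_gamC_mul (M := M) (N := N) hmom hSd hpos hP2m hP2d hP2o
  refine ⟨fun k n => rhoC_eq_zero hmom hSm hSd hSo, rhoC_add_two_self hmom hSm hSd hSo,
    fun n => ?_, fun n => ?_, fun n => ?_⟩
  · have hlast : (if 2 ≤ n then gamC μ c M N S P2 (n - 2) (n + 1) * gamC μ c M N S P2 (n - 2) n
        else 0) = 0 := ite_eq_right_iff.2 fun _ => by rw [hγ (by omega), zero_mul]
    rw [rhoC_comm hmom, hρ, sum_range_succ_eq_top_three fun j hj => by rw [hγ hj, mul_zero],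
      hlast, add_zero]
    simp only [mul_comm (gamC μ c M N S P2 _ (n + 1))]
  · rw [hρ, sum_range_succ_eq_top_three fun j hj => by rw [hγ hj, mul_zero]]
    simp only [← sq]
  · rw [X_sub_C_sq_mul_sN_eq_sum hmom hSm hSd hSo hpos hM hN, sum_range_succ, sum_range_succ,
      sum_range_succ_eq_top_three fun k hk => by
        rw [rhoC_eq_zero hmom hSm hSd hSo (Or.inl hk), C_0, zero_mul]]
    abel

/-- five term recurrence relation for the Sobolev-type orthonormal
polynomials, with `ρ_{k,n} = ⟨(x-c)² s_n^{M,N}, s_k^{M,N}⟩_S` and the convention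
that terms with negative indices vanish. -/
theorem stmt12
    (μ : Measure ℝ) [IsFiniteMeasure μ]
    (hmom : ∀ n : ℕ, Integrable (fun x : ℝ => x ^ n) μ)
    (hpos : ∀ q : Polynomial ℝ, q ≠ 0 → 0 < ∫ x, q.eval x ^ 2 ∂μ)
    (c : ℝ) (hc : ∀ᵐ x ∂μ, c < x)
    (P2 : ℕ → Polynomial ℝ) (hP2m : ∀ n, (P2 n).Monic) (hP2d : ∀ n, (P2 n).natDegree = n)
    (hP2o : ∀ m n, m ≠ n → ∫ x, (P2 m).eval x * (P2 n).eval x * (x - c) ^ 2 ∂μ = 0)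
    (M N : ℝ) (hM : 0 ≤ M) (hN : 0 ≤ N)
    (S : ℕ → Polynomial ℝ) (hSm : ∀ n, (S n).Monic) (hSd : ∀ n, (S n).natDegree = n)
    (hSo : ∀ m n, m ≠ n → ipS μ c M N (S m) (S n) = 0) :
    (∀ k n : ℕ, k + 2 < n ∨ n + 2 < k → rhoC μ c M N S k n = 0)
    ∧ (∀ n : ℕ, rhoC μ c M N S (n + 2) n = tC μ c M N S n / tC μ c M N S (n + 2))
    ∧ (∀ n : ℕ, rhoC μ c M N S (n + 1) n
        = gamC μ c M N S P2 n n * gamC μ c M N S P2 n (n + 1)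
          + (if 1 ≤ n then gamC μ c M N S P2 (n - 1) n * gamC μ c M N S P2 (n - 1) (n + 1)
             else 0))
    ∧ (∀ n : ℕ, rhoC μ c M N S n n
        = gamC μ c M N S P2 n n ^ 2
          + (if 1 ≤ n then gamC μ c M N S P2 (n - 1) n ^ 2 else 0)
          + (if 2 ≤ n then gamC μ c M N S P2 (n - 2) n ^ 2 else 0))
    ∧ (∀ n : ℕ,
        (X - C c) ^ 2 * sN μ c M N S n
          = C (rhoC μ c M N S (n + 2) n) * sN μ c M N S (n + 2)
            + C (rhoC μ c M N S (n + 1) n) * sN μ c M N S (n + 1)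
            + C (rhoC μ c M N S n n) * sN μ c M N S n
            + (if 1 ≤ n then C (rhoC μ c M N S (n - 1) n) * sN μ c M N S (n - 1) else 0)
            + (if 2 ≤ n then C (rhoC μ c M N S (n - 2) n) * sN μ c M N S (n - 2) else 0)) :=
  stmt12_general μ hmom hpos c P2 hP2m hP2d hP2o M N hM hN S hSm hSd hSo
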